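/- Let G be a (k, ε)-extractor with parameters (n, m, d), S a left-subset of size K = 2^k, and T ⊆ S the set of α-congested vertices for α > 1. Then |T| < (α/(α−1))·ε·K. -/

import Mathlib

/-!
All `D·|T|` edges leaving `T` land in the clot `Y`, so `|T|/K ≤ E(S,Y)/(DK)`. Every vertex of `Y`
has indegree above `αDK/M`, so this edge density is also at least `α|Y|/M`; together with the
extractor bound `E(S,Y)/(DK) < |Y|/M + ε` this forces `|Y|/M < ε/(α-1)`, hence
`|T|/K < ε/(α-1) + ε = αε/(α-1)`.
-/

open scoped Classical

/-- Number of edges from the left-subset `S` into the right-subset `Y`. -/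
noncomputable def edges {L R : Type*} {D : ℕ}
    (nbr : L → Fin D → R) (S : Finset L) (Y : Finset R) : ℕ :=
  ∑ x ∈ S, (Finset.univ.filter fun i => nbr x i ∈ Y).card

/-- `(k, ε)`-extractor property for a bipartite multigraph with left part
`{0,1}^n`, right part `{0,1}^m` and left-degree `D = 2^d`. -/
noncomputable def IsExtractor {n m d : ℕ} (nbr : Fin (2^n) → Fin (2^d) → Fin (2^m))
    (k : ℕ) (ε : ℝ) : Prop :=
  ∀ S : Finset (Fin (2^n)), 2^k ≤ S.card →
    ∀ Y : Finset (Fin (2^m)),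
      |(edges nbr S Y : ℝ) / ((2^d : ℕ) * S.card) - (Y.card : ℝ) / (2^m : ℕ)| < ε

/-- The `α`-clot of `S` with parameter `K = 2^k`: right vertices receiving more
than `α·D·K/M` edges from `S`. -/
noncomputable def clot {n m d : ℕ} (nbr : Fin (2^n) → Fin (2^d) → Fin (2^m))
    (S : Finset (Fin (2^n))) (k : ℕ) (α : ℝ) : Finset (Fin (2^m)) :=
  Finset.univ.filter fun y =>
    α * (2^d : ℕ) * (2^k : ℕ) / (2^m : ℕ) < (edges nbr S {y} : ℝ)

section Edges

variable {L R : Type*} {D : ℕ} (nbr : L → Fin D → R)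

lemma edges_eq_sum_edges_singleton (S : Finset L) (Y : Finset R) :
    edges nbr S Y = ∑ y ∈ Y, edges nbr S {y} := by
  unfold edges
  rw [Finset.sum_comm]
  refine Finset.sum_congr rfl fun x _ => ?_
  simp only [Finset.card_filter, Finset.mem_singleton]
  rw [Finset.sum_comm]
  simp [Finset.sum_ite_eq]

lemma edges_mono {S S' : Finset L} (h : S ⊆ S') (Y : Finset R) :
    edges nbr S Y ≤ edges nbr S' Y :=
  Finset.sum_le_sum_of_subset h

lemma edges_eq_card_mul_of_forall_mem {T : Finset L} {Y : Finset R}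
    (h : ∀ x ∈ T, ∀ i, nbr x i ∈ Y) : edges nbr T Y = T.card * D := by
  unfold edges
  rw [Finset.card_eq_sum_ones, Finset.sum_mul]
  refine Finset.sum_congr rfl fun x hx => ?_
  simp [h x hx]

lemma card_mul_le_edges_of_forall_lt {S : Finset L} {Y : Finset R} {c : ℝ}
    (h : ∀ y ∈ Y, c < edges nbr S {y}) : Y.card * c ≤ edges nbr S Y := by
  rw [edges_eq_sum_edges_singleton, Nat.cast_sum, ← nsmul_eq_mul]
  exact Finset.card_nsmul_le_sum _ _ _ fun y hy => (h y hy).le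

end Edges

section Clot

variable {n m d : ℕ} (nbr : Fin (2^n) → Fin (2^d) → Fin (2^m)) (S : Finset (Fin (2^n)))
  (k : ℕ) (α : ℝ)

lemma mul_card_clot_div_le_edges_div :
    α * ((clot nbr S k α).card / (2^m : ℕ)) ≤
      edges nbr S (clot nbr S k α) / ((2^d : ℕ) * (2^k : ℕ)) := by
  have h := card_mul_le_edges_of_forall_lt nbr (S := S) (Y := clot nbr S k α)
    fun y hy => (Finset.mem_filter.mp hy).2
  rw [le_div_iff₀ (by positivity)]
  calc α * ((clot nbr S k α).card / (2^m : ℕ)) * ((2^d : ℕ) * (2^k : ℕ))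
      = (clot nbr S k α).card * (α * (2^d : ℕ) * (2^k : ℕ) / (2^m : ℕ)) := by ring
    _ ≤ _ := h

lemma card_clot_div_lt {ε : ℝ} (hext : IsExtractor nbr k ε) (hα : 1 < α)
    (hS : S.card = 2^k) :
    ((clot nbr S k α).card : ℝ) / (2^m : ℕ) < ε / (α - 1) := by
  have hdens := mul_card_clot_div_le_edges_div nbr S k α
  have hdisc := lt_of_abs_lt (hext S hS.ge (clot nbr S k α))
  rw [hS] at hdisc
  rw [lt_div_iff₀ (by linarith)]
  linarith

end Clot

theorem stmt_5_general {n m d : ℕ} (k : ℕ) (ε : ℝ)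
    (nbr : Fin (2^n) → Fin (2^d) → Fin (2^m))
    (hext : IsExtractor nbr k ε) (α : ℝ) (hα : 1 < α)
    (S : Finset (Fin (2^n))) (hS : S.card = 2^k)
    (T : Finset (Fin (2^n)))
    (hT : T = S.filter fun x => ∀ i : Fin (2^d), nbr x i ∈ clot nbr S k α) :
    (T.card : ℝ) < (α / (α - 1)) * ε * (2^k : ℕ) := by
  set Y := clot nbr S k α
  have hK : (0 : ℝ) < (2^k : ℕ) := by positivity
  have hTY : T.card * 2^d ≤ edges nbr S Y := by
    rw [← edges_eq_card_mul_of_forall_mem nbr (Y := Y) fun x hx => by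
      rw [hT] at hx; exact (Finset.mem_filter.mp hx).2]
    exact edges_mono nbr (hT ▸ Finset.filter_subset _ _) Y
  have hT_le : (T.card : ℝ) / (2^k : ℕ) ≤ edges nbr S Y / ((2^d : ℕ) * (2^k : ℕ)) := by
    rw [← div_div, div_le_div_iff_of_pos_right hK, le_div_iff₀ (by positivity)]
    exact_mod_cast hTY
  have hdisc := lt_of_abs_lt (hext S hS.ge Y)
  rw [hS] at hdisc
  have hY : (Y.card : ℝ) / (2^m : ℕ) < ε / (α - 1) := card_clot_div_lt nbr S k α hext hα hS
  have hα' : α / (α - 1) * ε = ε / (α - 1) + ε := by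
    field_simp [(sub_pos.mpr hα).ne']
    ring
  rw [hα', ← div_lt_iff₀ hK]
  linarith

/-- if `G` is a `(k, ε)`-extractor, `S` has size `K = 2^k` and
`T ⊆ S` is the set of `α`-congested vertices of `S` (those all of whose
neighbours lie in the `α`-clot of `S`), then `|T| < (α/(α−1))·ε·K`. -/
theorem stmt_5 {n m d : ℕ} (k : ℕ) (ε : ℝ) (hε : 0 < ε)
    (nbr : Fin (2^n) → Fin (2^d) → Fin (2^m))
    (hext : IsExtractor nbr k ε) (α : ℝ) (hα : 1 < α)
    (S : Finset (Fin (2^n))) (hS : S.card = 2^k)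
    (T : Finset (Fin (2^n)))
    (hT : T = S.filter fun x => ∀ i : Fin (2^d), nbr x i ∈ clot nbr S k α) :
    (T.card : ℝ) < (α / (α - 1)) * ε * (2^k : ℕ) :=
  stmt_5_general k ε nbr hext α hα S hS T hT
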